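/- arXiv:1908.02384 — 3 statements merged into one kernel-verified Lean document; each statement's English description precedes it below -/
import Mathlib

section
/- For every integer m ≥ 0, the polynomial Q(2^{2m+1}−2)(x) is congruent to 1 + 2x·(1−δ_{m,0}) + 2·S_{2m}(x) modulo 4, where δ_{m,0} equals 1 if m=0 and 0 otherwise, i.e. every coefficient of the difference is divisible by 4. -/
open Polynomial

/-- The Thue–Morse ±1 sequence: t 0 = 1, t (2n) = t n, t (2n+1) = -t n. -/
def tmSeq : ℕ → ℤ
  | 0 => 1
  | n + 1 => if (n + 1) % 2 = 0 then tmSeq ((n + 1) / 2) else -tmSeq ((n + 1) / 2)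
decreasing_by all_goals exact Nat.div_lt_self (Nat.succ_pos n) one_lt_two

/-- Numerators of the convergents of the Thue–Morse continued fraction. -/
noncomputable def Ptm : ℕ → ℤ[X]
  | 0 => 1
  | 1 => 1
  | n + 2 => Ptm (n + 1) + C (tmSeq (n + 2)) * X * Ptm n

/-- Denominators of the convergents of the Thue–Morse continued fraction. -/
noncomputable def Qtm : ℕ → ℤ[X]
  | 0 => 1
  | 1 => 1 - X
  | n + 2 => Qtm (n + 1) + C (tmSeq (n + 2)) * X * Qtm n

/-- S_m(x) = Σ_{j<m} x^(2^j). -/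
noncomputable def Spoly (m : ℕ) : ℤ[X] := ∑ j ∈ Finset.range m, X ^ (2 ^ j)
/-- S^e_m(x) = Σ_{j<m} x^(2^(2j)). -/
noncomputable def SePoly (m : ℕ) : ℤ[X] := ∑ j ∈ Finset.range m, X ^ (2 ^ (2 * j))
/-- S^o_m(x) = Σ_{j<m} x^(2^(2j+1)). -/
noncomputable def SoPoly (m : ℕ) : ℤ[X] := ∑ j ∈ Finset.range m, X ^ (2 ^ (2 * j + 1))

namespace TM

abbrev S4 := Polynomial (ZMod 4)

lemma h4 : (4 : S4) = 0 := by
  calc (4 : S4) = C (4 : ZMod 4) := (map_ofNat C 4).symm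
  _ = 0 := by rw [show (4:ZMod 4) = 0 from rfl, map_zero]

noncomputable def phi : ℤ[X] →+* S4 := Polynomial.mapRingHom (Int.castRingHom (ZMod 4))

noncomputable def nu : S4 →+* S4 := Polynomial.eval₂RingHom Polynomial.C (-Polynomial.X)

lemma nu_X : nu X = -X := by simp [nu]
lemma nu_C (a : ZMod 4) : nu (C a) = C a := by simp [nu]

noncomputable def sp (k : ℕ) : S4 := ∑ j ∈ Finset.range k, X ^ (2^j)
noncomputable def so (k : ℕ) : S4 := ∑ j ∈ Finset.range k, X ^ (2^(2*j+1))
noncomputable def ep : ℕ → S4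
  | 0 => 0
  | k+1 => ep k + X^(2^k) * sp k

lemma sp_succ (k : ℕ) : sp (k+1) = sp k + X^(2^k) := Finset.sum_range_succ _ _
lemma so_succ (k : ℕ) : so (k+1) = so k + X^(2^(2*k+1)) := Finset.sum_range_succ _ _
lemma ep_succ (k : ℕ) : ep (k+1) = ep k + X^(2^k) * sp k := rfl

lemma pw_sq (k : ℕ) : ((X : S4)^(2^k))^2 = X^(2^(k+1)) := by
  rw [← pow_mul, ← pow_succ]

lemma sp_sq (k : ℕ) : (sp k)^2 = sp (k+1) - X + 2 * ep k := by
  induction k with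
  | zero => simp [sp, ep, sp_succ]
  | succ k ih =>
    rw [sp_succ, add_sq, ih, pw_sq, ep_succ, sp_succ (k+1)]
    ring

lemma nu_pw (k : ℕ) (hk : k ≠ 0) : nu ((X : S4)^(2^k)) = X^(2^k) := by
  rw [map_pow, nu_X]
  exact (Even.neg_pow ⟨2^(k-1), by rw [← two_mul, ← pow_succ']; congr 1; omega⟩ _)

lemma nu_sp (k : ℕ) (hk : k ≠ 0) : nu (sp k) = sp k - 2*X := by
  induction k with
  | zero => omega
  | succ k ih =>
    cases Nat.eq_zero_or_pos k with
    | inl h => subst h; rw [sp_succ]; simp [sp, nu_X]; ring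
    | inr h =>
      rw [sp_succ, map_add, ih (by omega), nu_pw k (by omega)]
      ring

lemma nu_so (k : ℕ) : nu (so k) = so k := by
  induction k with
  | zero => simp [so]
  | succ k ih => rw [so_succ, map_add, ih, nu_pw _ (by omega)]

lemma nu_even (q : S4) : ∃ e, nu q = q + 2*e := by
  induction q using Polynomial.induction_on' with
  | add p q hp hq =>
    obtain ⟨a, ha⟩ := hp; obtain ⟨b, hb⟩ := hq
    exact ⟨a+b, by rw [map_add, ha, hb]; ring⟩
  | monomial n a =>
    rw [← C_mul_X_pow_eq_monomial, map_mul, map_pow, nu_C, nu_X]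
    rcases Nat.even_or_odd n with he | ho
    · exact ⟨0, by rw [he.neg_pow]; ring⟩
    · refine ⟨C a * X^n, ?_⟩
      rw [ho.neg_pow]
      linear_combination (-(C a * X^n)) * h4

lemma nu_sq (q : S4) : nu (nu q) = q := by
  induction q using Polynomial.induction_on' with
  | add p q hp hq => rw [map_add, map_add, hp, hq]
  | monomial n a => rw [← C_mul_X_pow_eq_monomial, map_mul, map_pow, nu_C, nu_X,
      map_mul, map_pow, nu_C, map_neg, nu_X, neg_neg]


lemma tmSeq_zero : tmSeq 0 = 1 := by rw [tmSeq]

lemma tmSeq_two_mul (k : ℕ) : tmSeq (2*k) = tmSeq k := by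
  cases k with
  | zero => rfl
  | succ n =>
    rw [show 2*(n+1) = (2*n+1)+1 by ring, tmSeq]
    have h1 : (2*n+1+1) % 2 = 0 := by omega
    have h2 : (2*n+1+1) / 2 = n+1 := by omega
    rw [if_pos h1, h2]

lemma tmSeq_two_mul_add_one (k : ℕ) : tmSeq (2*k+1) = -tmSeq k := by
  rw [show 2*k+1 = (2*k)+1 from rfl, tmSeq]
  have h1 : ¬ ((2*k+1) % 2 = 0) := by omega
  have h2 : (2*k+1) / 2 = k := by omega
  rw [if_neg h1, h2]

lemma tmSeq_one : tmSeq 1 = -1 := by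
  have := tmSeq_two_mul_add_one 0
  simpa [tmSeq_zero] using this

lemma tmSeq_pm (k : ℕ) : tmSeq k = 1 ∨ tmSeq k = -1 := by
  induction k using Nat.strong_induction_on with
  | _ k ih =>
    match k, ih with
    | 0, _ => exact Or.inl tmSeq_zero
    | (n+1), ih =>
      rcases Nat.even_or_odd (n+1) with ⟨j, hj⟩ | ⟨j, hj⟩
      · have hj' : n+1 = 2*j := by omega
        rw [hj', tmSeq_two_mul]
        exact ih j (by omega)
      · rw [hj, tmSeq_two_mul_add_one]
        rcases ih j (by omega) with h | h
        · right; rw [h]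
        · left; rw [h]; ring

noncomputable def Tm (n : ℕ) : Matrix (Fin 2) (Fin 2) ℤ[X] := !![1, 1; C (tmSeq n) * X, 0]

noncomputable def Wm : ℕ → Matrix (Fin 2) (Fin 2) ℤ[X]
  | 0 => 1
  | n + 1 => Wm n * Tm n

noncomputable def Fpq : ℕ → Matrix (Fin 2) (Fin 2) ℤ[X] × Matrix (Fin 2) (Fin 2) ℤ[X]
  | 0 => (!![1, 1; X, 0], !![1, 1; -X, 0])
  | r + 1 => ((Fpq r).1 * (Fpq r).2, (Fpq r).2 * (Fpq r).1)

lemma Wm_succ (n : ℕ) : Wm (n+1) = Wm n * Tm n := rfl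
lemma Fpq_succ_1 (r : ℕ) : (Fpq (r+1)).1 = (Fpq r).1 * (Fpq r).2 := rfl
lemma Fpq_succ_2 (r : ℕ) : (Fpq (r+1)).2 = (Fpq r).2 * (Fpq r).1 := rfl

lemma W_block : ∀ r k, Wm (2^r * k + 2^r) = Wm (2^r * k) * (if tmSeq k = 1 then (Fpq r).1 else (Fpq r).2) := by
  intro r
  induction r with
  | zero =>
    intro k
    simp only [pow_zero, one_mul]
    rw [Wm_succ]
    congr 1
    rcases tmSeq_pm k with h | h
    · rw [if_pos h, Tm, h, show (Fpq 0).1 = !![1,1;X,0] from rfl]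
      norm_num
    · rw [if_neg (by rw [h]; decide), Tm, h, show (Fpq 0).2 = !![1,1;-X,0] from rfl]
      have : (C (-1 : ℤ)) * (X : ℤ[X]) = -X := by simp
      rw [this]
  | succ r ih =>
    intro k
    have e1 : 2^(r+1) * k + 2^(r+1) = 2^r * (2*k+1) + 2^r := by ring
    have e2 : 2^r * (2*k+1) = 2^r * (2*k) + 2^r := by ring
    have e3 : 2^r * (2*k) = 2^(r+1) * k := by ring
    rw [e1, ih (2*k+1), e2, ih (2*k), e3, tmSeq_two_mul, tmSeq_two_mul_add_one, mul_assoc]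
    congr 1
    rcases tmSeq_pm k with h | h
    · rw [h, if_pos (show (1:ℤ)=1 from rfl), if_neg (show ¬((-1:ℤ)=1) by decide),
        if_pos (show (1:ℤ)=1 from rfl), Fpq_succ_1]
    · rw [h, if_neg (show ¬((-1:ℤ)=1) by decide), if_pos (show (- -1:ℤ)=1 by decide),
        if_neg (show ¬((-1:ℤ)=1) by decide), Fpq_succ_2]

lemma W_entries : ∀ n, Wm (n+2) 0 0 = Qtm (n+1) ∧ Wm (n+2) 0 1 = Qtm n := by
  intro n
  induction n with
  | zero =>
    have h2 : Wm 2 = (Wm 0 * Tm 0) * Tm 1 := rfl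
    rw [h2]
    constructor <;>
      (simp [Wm, Tm, Matrix.mul_apply, Fin.sum_univ_two, tmSeq_zero, tmSeq_one, Qtm]; try ring)
  | succ n ih =>
    have h' : Wm (n+3) = Wm (n+2) * Tm (n+2) := rfl
    constructor
    · show Wm (n+3) 0 0 = Qtm (n+2)
      rw [h', Qtm]
      simp [Tm, Matrix.mul_apply, Fin.sum_univ_two, ih.1, ih.2]
      ring
    · show Wm (n+3) 0 1 = Qtm (n+1)
      rw [h']
      simp [Tm, Matrix.mul_apply, Fin.sum_univ_two, ih.1]

lemma Q_eq_FpFq (m : ℕ) (hm : 1 ≤ m) :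
    Qtm (2^(2*m+1) - 2) = ((Fpq (2*m)).1 * (Fpq (2*m)).2) 0 1 := by
  have h2 : 2 ≤ 2^(2*m+1) := by
    calc 2 = 2^1 := rfl
    _ ≤ 2^(2*m+1) := Nat.pow_le_pow_right (by norm_num) (by omega)
  have hN : 2^(2*m+1) - 2 + 2 = 2^(2*m+1) := by omega
  have hW := (W_entries (2^(2*m+1) - 2)).2
  rw [hN] at hW
  rw [← hW]
  have hA : Wm (2^(2*m)) = (Fpq (2*m)).1 := by
    have := W_block (2*m) 0
    simpa [tmSeq_zero, Wm] using this
  have hB : Wm (2^(2*m+1)) = Wm (2^(2*m)) * (Fpq (2*m)).2 := by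
    have hb := W_block (2*m) 1
    rw [show 2^(2*m+1) = 2^(2*m)*1 + 2^(2*m) by ring, hb, mul_one,
      if_neg (by rw [tmSeq_one]; decide)]
  rw [hB, hA]


-- ---------- mod 4 layer ----------

lemma phi_X : phi X = X := Polynomial.map_X _

noncomputable def ShapeE (j : ℕ) (d : S4) : Matrix (Fin 2) (Fin 2) S4 :=
  !![1+2*X^2-sp (2*j+3)+X^2^(2*j+3)+2*d, 1+2*sp (2*j+3);
     X+2*(X*so (j+1)), sp (2*j+3)+X^2^(2*j+3)-2*X^2+2*d]

def InvE (j : ℕ) : Prop := ∃ d, ((Fpq (2*j+4)).1).map ⇑phi = ShapeE j d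

lemma mat2_congr {R : Type*} (a b c d a' b' c' d' : R)
    (h1 : a = a') (h2 : b = b') (h3 : c = c') (h4 : d = d') :
    !![a,b;c,d] = !![a',b';c',d'] := by rw [h1, h2, h3, h4]

lemma map_mat2 (f : S4 →+* S4) (a b c d : S4) :
    (!![a,b;c,d]).map ⇑f = !![f a, f b; f c, f d] := by
  ext i j
  fin_cases i <;> fin_cases j <;> simp [Matrix.map_apply]

lemma nuF : ∀ r, (((Fpq r).2).map ⇑phi = (((Fpq r).1).map ⇑phi).map ⇑nu) ∧
    (((Fpq r).1).map ⇑phi = (((Fpq r).2).map ⇑phi).map ⇑nu) := by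
  intro r
  induction r with
  | zero =>
    constructor <;>
      · ext i j
        fin_cases i <;> fin_cases j <;>
          simp [Fpq, phi, Matrix.map_apply, nu_X]
  | succ r ih =>
    constructor
    · rw [Fpq_succ_2, Fpq_succ_1, Matrix.map_mul, Matrix.map_mul, Matrix.map_mul]
      congr 1
      exacts [ih.1, ih.2]
    · rw [Fpq_succ_2, Fpq_succ_1, Matrix.map_mul, Matrix.map_mul, Matrix.map_mul]
      congr 1
      exacts [ih.2, ih.1]

lemma phi_F0p : ((Fpq 0).1).map ⇑phi = !![1,1;X,0] := by
  ext i j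
  fin_cases i <;> fin_cases j <;> simp [Fpq, phi, Matrix.map_apply]

lemma phi_F0q : ((Fpq 0).2).map ⇑phi = !![1,1;-X,0] := by
  ext i j
  fin_cases i <;> fin_cases j <;> simp [Fpq, phi, Matrix.map_apply]

lemma invE_zero : InvE 0 := by
  have h1p : ((Fpq 1).1).map ⇑phi = !![1-X, 1; X, X] := by
    rw [Fpq_succ_1, Matrix.map_mul, phi_F0p, phi_F0q, Matrix.mul_fin_two]
    exact mat2_congr _ _ _ _ _ _ _ _ (by ring) (by ring) (by ring) (by ring)
  have h1q : ((Fpq 1).2).map ⇑phi = !![1+X, 1; -X, -X] := by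
    rw [Fpq_succ_2, Matrix.map_mul, phi_F0p, phi_F0q, Matrix.mul_fin_two]
    exact mat2_congr _ _ _ _ _ _ _ _ (by ring) (by ring) (by ring) (by ring)
  have h2p : ((Fpq 2).1).map ⇑phi = !![1-X-X^2, 1-2*X; X, X-X^2] := by
    rw [Fpq_succ_1, Matrix.map_mul, h1p, h1q, Matrix.mul_fin_two]
    exact mat2_congr _ _ _ _ _ _ _ _ (by ring) (by ring) (by ring) (by ring)
  have h2q : ((Fpq 2).2).map ⇑phi = !![1+X-X^2, 1+2*X; -X, -X-X^2] := by
    rw [Fpq_succ_2, Matrix.map_mul, h1q, h1p, Matrix.mul_fin_two]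
    exact mat2_congr _ _ _ _ _ _ _ _ (by ring) (by ring) (by ring) (by ring)
  have h3p : ((Fpq 3).1).map ⇑phi = !![1-X-X^2+X^4, 1-2*X^2; X, X+X^2+X^4] := by
    rw [Fpq_succ_1, Matrix.map_mul, h2p, h2q, Matrix.mul_fin_two]
    exact mat2_congr _ _ _ _ _ _ _ _ (by ring) (by ring) (by ring) (by ring)
  have h3q : ((Fpq 3).2).map ⇑phi = !![1+X-X^2+X^4, 1-2*X^2; -X, -X+X^2+X^4] := by
    rw [Fpq_succ_2, Matrix.map_mul, h2q, h2p, Matrix.mul_fin_two]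
    exact mat2_congr _ _ _ _ _ _ _ _ (by ring) (by ring) (by ring) (by ring)
  have h4p : ((Fpq 4).1).map ⇑phi =
      !![1-X-3*X^2+2*X^3+3*X^4-2*X^6+X^8, 1-2*X-2*X^2+4*X^3+2*X^4-4*X^6;
         X-2*X^3, X-X^2-2*X^3+X^4+2*X^6+X^8] := by
    rw [Fpq_succ_1, Matrix.map_mul, h3p, h3q, Matrix.mul_fin_two]
    exact mat2_congr _ _ _ _ _ _ _ _ (by ring) (by ring) (by ring) (by ring)
  refine ⟨X^3+X^6, ?_⟩
  rw [show (2*0+4 : ℕ) = 4 by norm_num, h4p, ShapeE]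
  have hsp3 : sp (2*0+3) = X+X^2+X^4 := by
    simp [sp, Finset.sum_range_succ]
  have hso1 : so (0+1) = X^2 := by
    simp [so, Finset.sum_range_succ]
  have hpw3 : (X : S4)^2^(2*0+3) = X^8 := by norm_num
  rw [hsp3, hso1, hpw3]
  refine mat2_congr _ _ _ _ _ _ _ _ ?_ ?_ ?_ ?_
  · linear_combination (-X^2+X^4-X^6) * h4
  · linear_combination (-X-X^2+X^3-X^6) * h4
  · linear_combination (-X^3) * h4
  · linear_combination (-X^3) * h4

lemma invE_succ (j : ℕ) (h : InvE j) : InvE (j+1) := by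
  obtain ⟨d, hA⟩ := h
  obtain ⟨e, he⟩ := nu_even d
  have hX2 : nu ((X:S4)^2) = X^2 := by rw [map_pow, nu_X]; ring
  have hpwK : nu ((X:S4)^2^(2*j+3)) = X^2^(2*j+3) := nu_pw _ (by omega)
  have hpwK1 : nu ((X:S4)^2^(2*j+4)) = X^2^(2*j+4) := nu_pw _ (by omega)
  have hspK : nu (sp (2*j+3)) = sp (2*j+3) - 2*X := nu_sp _ (by omega)
  have hsoJ : nu (so (j+1)) = so (j+1) := nu_so _
  have hs : (sp (2*j+3))^2 = sp (2*j+3) + X^2^(2*j+3) - X + 2*ep (2*j+3) := by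
    rw [sp_sq, sp_succ]
  have hp : ((X:S4)^2^(2*j+3))^2 = X^2^(2*j+4) := by
    have := pw_sq (2*j+3)
    rwa [show 2*j+3+1 = 2*j+4 by omega] at this
  have hP2 : ((X:S4)^2^(2*j+4))^2 = X^2^(2*j+5) := by
    have := pw_sq (2*j+4)
    rwa [show 2*j+4+1 = 2*j+5 by omega] at this
  have hB : ((Fpq (2*j+4)).2).map ⇑phi =
      !![1+2*X^2-(sp (2*j+3)-2*X)+X^2^(2*j+3)+2*(d+2*e), 1+2*(sp (2*j+3)-2*X);
         -(X+2*(X*so (j+1))), (sp (2*j+3)-2*X)+X^2^(2*j+3)-2*X^2+2*(d+2*e)] := by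
    rw [(nuF (2*j+4)).1, hA, ShapeE, map_mat2]
    refine mat2_congr _ _ _ _ _ _ _ _ ?_ ?_ ?_ ?_ <;>
      · simp only [map_add, map_sub, map_mul, map_one, map_ofNat, hX2, hpwK, hspK, hsoJ, he, nu_X]
        try ring
  have hFp5 : ((Fpq (2*j+5)).1).map ⇑phi =
      ((Fpq (2*j+4)).1).map ⇑phi * ((Fpq (2*j+4)).2).map ⇑phi := by
    rw [show 2*j+5 = (2*j+4)+1 by omega, Fpq_succ_1, Matrix.map_mul]
  have hOdd : ((Fpq (2*j+5)).1).map ⇑phi =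
      !![1-(sp (2*j+3)+X^2^(2*j+3))+X^2^(2*j+4)
           +2*(ep (2*j+3) + sp (2*j+3)*X^2^(2*j+3) + X*so (j+1) + X*X^2^(2*j+3)),
         1+2*(sp (2*j+3)+X^2^(2*j+3))-2*X;
         X+2*(X*(sp (2*j+3)-so (j+1)-X)),
         sp (2*j+3)+X^2^(2*j+3)+X^2^(2*j+4)
           +2*(ep (2*j+3) + sp (2*j+3)*X^2^(2*j+3) + X*so (j+1) + X*X^2^(2*j+3))] := by
    rw [hFp5, hA, hB, ShapeE, Matrix.mul_fin_two]
    refine mat2_congr _ _ _ _ _ _ _ _ ?_ ?_ ?_ ?_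
    · linear_combination (e + d + 2*d*e + d^2 + X^2^(2*j+3) + X^2^(2*j+3)*e + X^2^(2*j+3)*d
        - sp (2*j+3)*e - sp (2*j+3)*d - sp (2*j+3)*X^2^(2*j+3) - X*so (j+1) + X*d
        - X*sp (2*j+3) - X*sp (2*j+3)*so (j+1) + X^2 + 2*X^2*e + 2*X^2*d
        + X^2*X^2^(2*j+3) - X^2*sp (2*j+3) + X^3 + X^4) * h4 + hs + hp
    · linear_combination (e + d + 2*sp (2*j+3)*e + 2*sp (2*j+3)*d + sp (2*j+3)*X^2^(2*j+3)
        - X - 2*X*d - X*X^2^(2*j+3) - 2*X^3) * h4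
    · linear_combination (X*so (j+1) + X*e + 2*X*e*so (j+1) - X*sp (2*j+3)
        - X*sp (2*j+3)*so (j+1) + X^2 + X^2*so (j+1) + X^3 + 2*X^3*so (j+1)) * h4
    · linear_combination (2*d*e + d^2 + X^2^(2*j+3)*e + X^2^(2*j+3)*d + sp (2*j+3)*e
        + sp (2*j+3)*d - X*d - X*X^2^(2*j+3) + X*sp (2*j+3)*so (j+1) - X^2
        - 2*X^2*so (j+1) - 2*X^2*e - 2*X^2*d - X^2*X^2^(2*j+3) - X^2*sp (2*j+3)
        + X^3 + X^4) * h4 + hs + hp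
  obtain ⟨e2, he2⟩ := nu_even (ep (2*j+3) + sp (2*j+3)*X^2^(2*j+3) + X*so (j+1) + X*X^2^(2*j+3))
  have hB5 : ((Fpq (2*j+5)).2).map ⇑phi =
      !![1-((sp (2*j+3)-2*X)+X^2^(2*j+3))+X^2^(2*j+4)
           +2*(ep (2*j+3) + sp (2*j+3)*X^2^(2*j+3) + X*so (j+1) + X*X^2^(2*j+3))+4*e2,
         1+2*((sp (2*j+3)-2*X)+X^2^(2*j+3))+2*X;
         -X-2*(X*((sp (2*j+3)-2*X)-so (j+1)+X)),
         (sp (2*j+3)-2*X)+X^2^(2*j+3)+X^2^(2*j+4)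
           +2*(ep (2*j+3) + sp (2*j+3)*X^2^(2*j+3) + X*so (j+1) + X*X^2^(2*j+3))+4*e2] := by
    rw [(nuF (2*j+5)).1, hOdd, map_mat2]
    refine mat2_congr _ _ _ _ _ _ _ _ ?_ ?_ ?_ ?_ <;>
      · simp only [map_add, map_sub, map_mul, map_one, map_ofNat, hX2, hpwK, hpwK1, hspK,
          hsoJ, he2, nu_X]
        ring
  have hFp6 : ((Fpq (2*j+6)).1).map ⇑phi =
      ((Fpq (2*j+5)).1).map ⇑phi * ((Fpq (2*j+5)).2).map ⇑phi := by
    rw [show 2*j+6 = (2*j+5)+1 by omega, Fpq_succ_1, Matrix.map_mul]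
  have hEven : ((Fpq (2*j+6)).1).map ⇑phi =
      !![1+2*X^2-((sp (2*j+3)+X^2^(2*j+3))+X^2^(2*j+4))+X^2^(2*j+5)
           +2*(ep (2*j+3) + X^2^(2*j+3)*X^2^(2*j+4) + sp (2*j+3)*X^2^(2*j+4)
             + sp (2*j+3)*X^2^(2*j+3) + X*so (j+1) + X*X^2^(2*j+4) + X*sp (2*j+3) + X^2),
         1+2*((sp (2*j+3)+X^2^(2*j+3))+X^2^(2*j+4));
         X+2*(X*(so (j+1)+X^2^(2*j+3))),
         (sp (2*j+3)+X^2^(2*j+3))+X^2^(2*j+4)+X^2^(2*j+5)-2*X^2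
           +2*(ep (2*j+3) + X^2^(2*j+3)*X^2^(2*j+4) + sp (2*j+3)*X^2^(2*j+4)
             + sp (2*j+3)*X^2^(2*j+3) + X*so (j+1) + X*X^2^(2*j+4) + X*sp (2*j+3) + X^2)] := by
    rw [hFp6, hOdd, hB5, Matrix.mul_fin_two]
    set x : S4 := X
    set s := sp (2*j+3)
    set p : S4 := X^2^(2*j+3)
    set P2 : S4 := X^2^(2*j+4)
    set Pn : S4 := X^2^(2*j+5)
    set E := ep (2*j+3)
    set o := so (j+1)
    set dd := E + s*p + x*o + x*p with hdd
    refine mat2_congr _ _ _ _ _ _ _ _ ?_ ?_ ?_ ?_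
    · linear_combination (e2 + dd + 2*dd*e2 + dd^2 + P2 + P2*e2 + P2*dd - p*e2 - p*dd - p*P2
        - s*e2 - s*dd - s*P2 + x*dd - 2*x*E - 2*x*p + x*p*o - 3*x*s + x*s*o - x*s*p
        + x^2 - x^2*o + x^2*p + 2*x^2*s - x^3) * h4 + (1 - 4*x)*hs + hp + hP2
    · linear_combination (e2 + dd + 2*p*e2 + 2*p*dd + p*P2 + 2*s*e2 + 2*s*dd + s*P2
        - x - 2*x*e2 - 2*x*dd - x*P2 - x*p - x*s + x^2) * h4
    · linear_combination (-x*o + x*e2 - 2*x*e2*o - 2*x*E - 2*x*p + x*p*o - x*s + x*s*o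
        + 2*x*s*e2 - x*s*p + x^2 - x^2*o - 2*x^2*e2 + x^2*p + 2*x^2*s - x^3) * h4
        + (-4*x)*hs
    · linear_combination (2*dd*e2 + dd^2 + P2*e2 + P2*dd + p*e2 + p*dd + s*e2 + s*dd
        - x*o - x*dd + 2*x*E - x*P2 + x*p - x*p*o + x*s - x*s*o + x*s*p - 2*x^2 + x^2*o
        - x^2*p - 2*x^2*s + x^3) * h4 + (1 + 4*x)*hs + hp + hP2
  refine ⟨ep (2*j+3) + X^2^(2*j+3)*X^2^(2*j+4) + sp (2*j+3)*X^2^(2*j+4)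
    + sp (2*j+3)*X^2^(2*j+3) + X*so (j+1) + X*X^2^(2*j+4) + X*sp (2*j+3) + X^2, ?_⟩
  rw [show 2*(j+1)+4 = 2*j+6 by omega, hEven, ShapeE]
  have hsp5 : sp (2*(j+1)+3) = sp (2*j+3)+X^2^(2*j+3)+X^2^(2*j+4) := by
    rw [show 2*(j+1)+3 = (2*j+4)+1 by omega, sp_succ, show 2*j+4 = (2*j+3)+1 by omega, sp_succ]
  have hso2 : so (j+1+1) = so (j+1) + X^2^(2*j+3) := by
    rw [so_succ, show 2*(j+1)+1 = 2*j+3 by omega]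
  have hpw5 : (2 : ℕ)^(2*(j+1)+3) = 2^(2*j+5) := by
    rw [show 2*(j+1)+3 = 2*j+5 by omega]
  rw [hsp5, hso2, hpw5]

lemma invE_all (j : ℕ) : InvE j := by
  induction j with
  | zero => exact invE_zero
  | succ j ih => exact invE_succ j ih

lemma mat2_apply_01 (a b c d : S4) : (!![a,b;c,d]) 0 1 = b := by simp

lemma phi_Spoly (k : ℕ) : phi (Spoly k) = sp k := by
  simp [phi, Spoly, sp, Polynomial.map_sum]

lemma Qphi (j : ℕ) : phi (Qtm (2^(2*(j+2)+1) - 2)) = 1+2*X+2*(sp (2*j+3)+X^2^(2*j+3)) := by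
  have hQ := Q_eq_FpFq (j+2) (by omega)
  obtain ⟨d, hA⟩ := invE_all j
  obtain ⟨e, he⟩ := nu_even d
  have hX2 : nu ((X:S4)^2) = X^2 := by rw [map_pow, nu_X]; ring
  have hpwK : nu ((X:S4)^2^(2*j+3)) = X^2^(2*j+3) := nu_pw _ (by omega)
  have hspK : nu (sp (2*j+3)) = sp (2*j+3) - 2*X := nu_sp _ (by omega)
  have hsoJ : nu (so (j+1)) = so (j+1) := nu_so _
  have hB : ((Fpq (2*j+4)).2).map ⇑phi =
      !![1+2*X^2-(sp (2*j+3)-2*X)+X^2^(2*j+3)+2*(d+2*e), 1+2*(sp (2*j+3)-2*X);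
         -(X+2*(X*so (j+1))), (sp (2*j+3)-2*X)+X^2^(2*j+3)-2*X^2+2*(d+2*e)] := by
    rw [(nuF (2*j+4)).1, hA, ShapeE, map_mat2]
    refine mat2_congr _ _ _ _ _ _ _ _ ?_ ?_ ?_ ?_ <;>
      · simp only [map_add, map_sub, map_mul, map_one, map_ofNat, hX2, hpwK, hspK, hsoJ, he, nu_X]
        try ring
  rw [hQ]
  have hent : phi (((Fpq (2*(j+2))).1 * (Fpq (2*(j+2))).2) 0 1)
      = (((Fpq (2*j+4)).1).map ⇑phi * ((Fpq (2*j+4)).2).map ⇑phi) 0 1 := by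
    rw [show 2*(j+2) = 2*j+4 by omega, ← Matrix.map_mul]
    rfl
  rw [hent, hA, hB, ShapeE, Matrix.mul_fin_two, mat2_apply_01]
  linear_combination (e + d + 2*sp (2*j+3)*e + 2*sp (2*j+3)*d + sp (2*j+3)*X^2^(2*j+3)
    - 2*X - 2*X*d - X*X^2^(2*j+3) - 2*X^3) * h4

lemma dvd_of_phi (p : ℤ[X]) (h : phi p = 0) : ∀ k, (4 : ℤ) ∣ p.coeff k := by
  intro k
  have hc := congrArg (fun q => Polynomial.coeff q k) h
  simp only [phi, Polynomial.coe_mapRingHom, Polynomial.coeff_map, Polynomial.coeff_zero] at hc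
  have hc' : ((p.coeff k : ℤ) : ZMod 4) = 0 := by exact_mod_cast hc
  exact_mod_cast (ZMod.intCast_zmod_eq_zero_iff_dvd (p.coeff k) 4).mp hc'

lemma Qtm_zero : Qtm 0 = 1 := by rw [Qtm]
lemma Qtm_one : Qtm 1 = 1 - X := by rw [Qtm]
lemma Qtm_step (n : ℕ) : Qtm (n+2) = Qtm (n+1) + C (tmSeq (n+2)) * X * Qtm n := by rw [Qtm]

lemma tm2 : tmSeq 2 = -1 := by
  rw [show (2:ℕ) = 2*1 by norm_num, tmSeq_two_mul, tmSeq_one]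
lemma tm3 : tmSeq 3 = 1 := by
  rw [show (3:ℕ) = 2*1+1 by norm_num, tmSeq_two_mul_add_one, tmSeq_one]; ring
lemma tm4 : tmSeq 4 = -1 := by
  rw [show (4:ℕ) = 2*2 by norm_num, tmSeq_two_mul, tm2]
lemma tm5 : tmSeq 5 = 1 := by
  rw [show (5:ℕ) = 2*2+1 by norm_num, tmSeq_two_mul_add_one, tm2]; ring
lemma tm6 : tmSeq 6 = 1 := by
  rw [show (6:ℕ) = 2*3 by norm_num, tmSeq_two_mul, tm3]

lemma Qtm_six : Qtm 6 = 1 - 2*X^2 := by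
  have q2 : Qtm 2 = 1 - 2*X := by
    have h := Qtm_step 0
    norm_num [tm2, Qtm_zero, Qtm_one] at h
    rw [h]; ring
  have q3 : Qtm 3 = 1 - X - X^2 := by
    have h := Qtm_step 1
    norm_num [tm3, q2, Qtm_one] at h
    rw [h]; ring
  have q4 : Qtm 4 = 1 - 2*X + X^2 := by
    have h := Qtm_step 2
    norm_num [tm4, q3, q2] at h
    rw [h]; ring
  have q5 : Qtm 5 = 1 - X - X^3 := by
    have h := Qtm_step 3
    norm_num [tm5, q4, q3] at h
    rw [h]; ring
  have h := Qtm_step 4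
  norm_num [tm6, q5, q4] at h
  rw [h]; ring

end TM

/-- Q(2^(2m+1)−2)(x) ≡ 1 + 2x·(1−δ_{m,0}) + 2·S_{2m}(x) (mod 4). -/
theorem Qtm_pow_odd_sub_two_mod_four (m : ℕ) :
    ∀ k, (4 : ℤ) ∣ (Qtm (2 ^ (2 * m + 1) - 2)
      - (1 + 2 * X * (1 - if m = 0 then 1 else 0) + 2 * Spoly (2 * m))).coeff k := by
  obtain _ | _ | j := m
  · -- m = 0
    have hN : (2 ^ (2 * 0 + 1) - 2 : ℕ) = 0 := by norm_num
    have hS : Spoly (2 * 0) = 0 := by simp [Spoly]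
    have : Qtm (2 ^ (2 * 0 + 1) - 2)
        - (1 + 2 * X * (1 - if (0:ℕ) = 0 then 1 else 0) + 2 * Spoly (2 * 0)) = 0 := by
      rw [hN, hS, TM.Qtm_zero, if_pos rfl]; ring
    rw [this]
    intro k
    simp
  · -- m = 1
    have hN : (2 ^ (2 * 1 + 1) - 2 : ℕ) = 6 := by norm_num
    have hS : Spoly (2 * 1) = X + X^2 := by
      norm_num [Spoly, Finset.sum_range_succ]
    have : Qtm (2 ^ (2 * 1 + 1) - 2)
        - (1 + 2 * X * (1 - if (1:ℕ) = 0 then 1 else 0) + 2 * Spoly (2 * 1))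
        = C 4 * (-X - X^2) := by
      rw [hN, hS, TM.Qtm_six, if_neg one_ne_zero, map_ofNat]; ring
    rw [this]
    intro k
    rw [Polynomial.coeff_C_mul]
    exact dvd_mul_right 4 _
  · -- m = j + 2
    apply TM.dvd_of_phi
    rw [map_sub]
    have hq := TM.Qphi j
    rw [show j+1+1 = j+2 from rfl, hq]
    have hsp : TM.sp (2*(j+2)) = TM.sp (2*j+3) + X^2^(2*j+3) := by
      rw [show 2*(j+2) = (2*j+3)+1 by omega, TM.sp_succ]
    rw [if_neg (by omega)]
    simp only [map_add, map_mul, map_one, map_zero, map_sub, map_ofNat, TM.phi_X, TM.phi_Spoly, hsp]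
    ring
end

section
/- Let C̄(x), D̄(x) ∈ (ℤ/4ℤ)[[x]] be the reductions modulo 4 of C(x) and D(x). Then (x·C̄(x)² + C̄(x) + 1)² = 0 and (x·D̄(x)² + D̄(x) + 1)² = 0 in (ℤ/4ℤ)[[x]]; that is, the polynomial S(x,y) = (x·y² + y + 1)² ∈ (ℤ/4ℤ)[x,y] annihilates both C̄(x) and D̄(x). -/
open Polynomial

open Polynomial

/-- The period-doubling ±1 sequence: s (2n) = 1, s (2n+1) = -s n. -/
def pdSeq : ℕ → ℤ
  | 0 => 1
  | n + 1 => if (n + 1) % 2 = 0 then 1 else -pdSeq ((n + 1) / 2)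
decreasing_by exact Nat.div_lt_self (Nat.succ_pos n) one_lt_two

/-- Numerators of the convergents of the period-doubling continued fraction. -/
noncomputable def Ppd : ℕ → ℤ[X]
  | 0 => 1
  | 1 => 1
  | n + 2 => Ppd (n + 1) + C (pdSeq (n + 2)) * X * Ppd n

/-- Denominators of the convergents of the period-doubling continued fraction. -/
noncomputable def Qpd : ℕ → ℤ[X]
  | 0 => 1
  | 1 => 1 - X
  | n + 2 => Qpd (n + 1) + C (pdSeq (n + 2)) * X * Qpd n

lemma tmSeq_cast2 : ∀ n, ((tmSeq n : ℤ) : ZMod 2) = 1 := by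
  intro n
  induction n using Nat.strong_induction_on with
  | _ n ih =>
    rcases n with _ | n
    · show ((tmSeq 0 : ℤ) : ZMod 2) = 1
      rw [tmSeq]; norm_num
    · rw [tmSeq]
      split <;> push_cast <;>
        rw [ih ((n+1)/2) (Nat.div_lt_self (Nat.succ_pos n) one_lt_two)]
      exact (CharTwo.neg_eq 1)

noncomputable def pp2 : ℕ → (ZMod 2)[X]
  | 0 => 1
  | 1 => 1
  | n + 2 => pp2 (n + 1) + X * pp2 n

noncomputable def qq2 : ℕ → (ZMod 2)[X]
  | 0 => 1
  | 1 => 1 - X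
  | n + 2 => qq2 (n + 1) + X * qq2 n

lemma h2 : (2 : (ZMod 2)[X]) = 0 := by
  rw [← map_ofNat (C : ZMod 2 →+* _) 2, show (2:ZMod 2) = 0 from rfl, map_zero]

lemma L1 : ∀ n, pp2 (n+1) * qq2 n + pp2 n * qq2 (n+1) = X ^ (n+1) := by
  intro n
  induction n with
  | zero => simp [pp2, qq2]; linear_combination (1 - (X:(ZMod 2)[X])) * h2
  | succ n ih =>
    show pp2 (n+2) * qq2 (n+1) + pp2 (n+1) * qq2 (n+2) = _
    rw [pp2, qq2]
    linear_combination X * ih + (pp2 (n+1) * qq2 (n+1)) * h2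

lemma L2 : ∀ n, X * pp2 n ^ 2 + pp2 n * qq2 n + qq2 n ^ 2 = X ^ (n+1) := by
  intro n
  induction n using Nat.twoStepInduction with
  | zero => simp [pp2, qq2]; linear_combination h2
  | one => simp [pp2, qq2]; linear_combination (1 - (X:(ZMod 2)[X])) * h2
  | more n ih0 ih1 =>
    rw [pp2, qq2]
    linear_combination ih1 + X^2 * ih0 + X * (L1 n)
      + (X^(n+2) + X^2 * pp2 (n+1) * pp2 n + X * qq2 (n+1) * qq2 n) * h2

lemma pdSeq_cast2 : ∀ n, ((pdSeq n : ℤ) : ZMod 2) = 1 := by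
  intro n
  induction n using Nat.strong_induction_on with
  | _ n ih =>
    rcases n with _ | n
    · show ((pdSeq 0 : ℤ) : ZMod 2) = 1
      rw [pdSeq]; norm_num
    · rw [pdSeq]
      split
      · norm_num
      · push_cast
        rw [ih ((n+1)/2) (Nat.div_lt_self (Nat.succ_pos n) one_lt_two)]
        exact (CharTwo.neg_eq 1)

lemma map_Ptm : ∀ n, (Ptm n).map (Int.castRingHom (ZMod 2)) = pp2 n := by
  intro n
  induction n using Nat.twoStepInduction with
  | zero => simp [Ptm, pp2]
  | one => simp [Ptm, pp2]
  | more n ih0 ih1 =>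
    rw [Ptm, pp2, Polynomial.map_add, Polynomial.map_mul, Polynomial.map_mul,
      Polynomial.map_C, Polynomial.map_X, ih0, ih1]
    simp [tmSeq_cast2]

lemma map_Qtm : ∀ n, (Qtm n).map (Int.castRingHom (ZMod 2)) = qq2 n := by
  intro n
  induction n using Nat.twoStepInduction with
  | zero => simp [Qtm, qq2]
  | one => simp [Qtm, qq2]
  | more n ih0 ih1 =>
    rw [Qtm, qq2, Polynomial.map_add, Polynomial.map_mul, Polynomial.map_mul,
      Polynomial.map_C, Polynomial.map_X, ih0, ih1]
    simp [tmSeq_cast2]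

lemma map_Ppd : ∀ n, (Ppd n).map (Int.castRingHom (ZMod 2)) = pp2 n := by
  intro n
  induction n using Nat.twoStepInduction with
  | zero => simp [Ppd, pp2]
  | one => simp [Ppd, pp2]
  | more n ih0 ih1 =>
    rw [Ppd, pp2, Polynomial.map_add, Polynomial.map_mul, Polynomial.map_mul,
      Polynomial.map_C, Polynomial.map_X, ih0, ih1]
    simp [pdSeq_cast2]

lemma map_Qpd : ∀ n, (Qpd n).map (Int.castRingHom (ZMod 2)) = qq2 n := by
  intro n
  induction n using Nat.twoStepInduction with
  | zero => simp [Qpd, qq2]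
  | one => simp [Qpd, qq2]
  | more n ih0 ih1 =>
    rw [Qpd, qq2, Polynomial.map_add, Polynomial.map_mul, Polynomial.map_mul,
      Polynomial.map_C, Polynomial.map_X, ih0, ih1]
    simp [pdSeq_cast2]

lemma qq2_constCoeff : ∀ n, (qq2 n).coeff 0 = 1 := by
  intro n
  induction n using Nat.twoStepInduction with
  | zero => simp [qq2]
  | one => simp [qq2]
  | more n ih0 ih1 => simp [qq2, ih0, ih1]

lemma coe_map_ps {R S : Type*} [CommRing R] [CommRing S] (f : R →+* S) (p : R[X]) :
    PowerSeries.map f (p : PowerSeries R) = ((p.map f : S[X]) : PowerSeries S) := by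
  ext n
  simp [Polynomial.coeff_coe]

lemma mod2_rel (c : PowerSeries (ZMod 2))
    (h : ∀ n, (PowerSeries.X : PowerSeries (ZMod 2)) ^ (n + 1) ∣
      c * (qq2 n : PowerSeries (ZMod 2)) - (pp2 n : PowerSeries (ZMod 2))) :
    PowerSeries.X * c ^ 2 + c + 1 = 0 := by
  have key : ∀ n, (PowerSeries.X : PowerSeries (ZMod 2)) ^ (n + 1) ∣
      (PowerSeries.X * c ^ 2 + c + 1) := by
    intro n
    have hq : IsUnit ((qq2 n : PowerSeries (ZMod 2)) ^ 2) := by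
      apply IsUnit.pow
      rw [PowerSeries.isUnit_iff_constantCoeff, Polynomial.constantCoeff_coe,
        qq2_constCoeff n]
      exact isUnit_one
    rw [← hq.dvd_mul_right]
    have hident : ((X * pp2 n ^ 2 + pp2 n * qq2 n + qq2 n ^ 2 : (ZMod 2)[X]) :
        PowerSeries (ZMod 2)) = PowerSeries.X ^ (n + 1) := by
      rw [L2 n]
      push_cast
      ring
    have hsplit : (PowerSeries.X * c ^ 2 + c + 1) * (qq2 n : PowerSeries (ZMod 2)) ^ 2 =
        (c * (qq2 n : PowerSeries (ZMod 2)) - (pp2 n : PowerSeries (ZMod 2))) *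
          (PowerSeries.X * (c * (qq2 n : PowerSeries (ZMod 2)) + (pp2 n : PowerSeries (ZMod 2)))
            + (qq2 n : PowerSeries (ZMod 2)))
        + ((X * pp2 n ^ 2 + pp2 n * qq2 n + qq2 n ^ 2 : (ZMod 2)[X]) :
            PowerSeries (ZMod 2)) := by
      push_cast
      ring
    rw [hsplit, hident]
    exact dvd_add ((h n).mul_right _) (dvd_refl _)
  ext n
  rw [PowerSeries.X_pow_dvd_iff.mp (key n) n (Nat.lt_succ_self n)]
  simp

lemma sq_zero_of_map2_zero (F : PowerSeries (ZMod 4))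
    (h : PowerSeries.map (ZMod.castHom (show (2:ℕ) ∣ 4 by norm_num) (ZMod 2)) F = 0) :
    F ^ 2 = 0 := by
  have hz : ∀ a b : ZMod 4,
      (ZMod.castHom (show (2:ℕ) ∣ 4 by norm_num) (ZMod 2)) a = 0 →
      (ZMod.castHom (show (2:ℕ) ∣ 4 by norm_num) (ZMod 2)) b = 0 → a * b = 0 := by decide
  rw [sq]
  ext n
  rw [PowerSeries.coeff_mul, map_zero]
  apply Finset.sum_eq_zero
  intro p _
  apply hz
  · rw [← PowerSeries.coeff_map, h, map_zero]
  · rw [← PowerSeries.coeff_map, h, map_zero]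

lemma main_half (Fx : PowerSeries ℤ) (P Q : ℕ → ℤ[X])
    (hmP : ∀ n, (P n).map (Int.castRingHom (ZMod 2)) = pp2 n)
    (hmQ : ∀ n, (Q n).map (Int.castRingHom (ZMod 2)) = qq2 n)
    (h : ∀ n, (PowerSeries.X : PowerSeries ℤ) ^ (n + 1) ∣
      Fx * (Q n : PowerSeries ℤ) - (P n : PowerSeries ℤ)) :
    (PowerSeries.X * (PowerSeries.map (Int.castRingHom (ZMod 4)) Fx) ^ 2
        + PowerSeries.map (Int.castRingHom (ZMod 4)) Fx + 1) ^ 2 = 0 := by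
  set c4 := PowerSeries.map (Int.castRingHom (ZMod 4)) Fx with hc4
  set c2 := PowerSeries.map (Int.castRingHom (ZMod 2)) Fx with hc2
  have hcomp : PowerSeries.map (ZMod.castHom (show (2:ℕ) ∣ 4 by norm_num) (ZMod 2)) c4 = c2 := by
    ext n
    simp [hc4, hc2, PowerSeries.coeff_map, map_intCast]
  apply sq_zero_of_map2_zero
  have hdvd2 : ∀ n, (PowerSeries.X : PowerSeries (ZMod 2)) ^ (n + 1) ∣
      c2 * (qq2 n : PowerSeries (ZMod 2)) - (pp2 n : PowerSeries (ZMod 2)) := by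
    intro n
    have := _root_.map_dvd (PowerSeries.map (Int.castRingHom (ZMod 2))) (h n)
    rw [map_pow, PowerSeries.map_X, map_sub, map_mul, coe_map_ps, coe_map_ps,
      hmP, hmQ] at this
    exact this
  have h0 : PowerSeries.X * c2 ^ 2 + c2 + 1 = 0 := mod2_rel c2 hdvd2
  rw [map_add, map_add, map_mul, map_pow, PowerSeries.map_X, map_one, hcomp, h0]

/-- The polynomial S(x,y) = (x·y² + y + 1)² over ℤ/4ℤ annihilates both the reduction
mod 4 of the Thue–Morse continued fraction C(x) and of the period-doubling continued
fraction D(x). -/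
theorem tm_pd_cf_annihilating_polynomial (Cx Dx : PowerSeries ℤ)
    (hC : ∀ n : ℕ, (PowerSeries.X : PowerSeries ℤ) ^ (n + 1) ∣
      Cx * (Qtm n : PowerSeries ℤ) - (Ptm n : PowerSeries ℤ))
    (hD : ∀ n : ℕ, (PowerSeries.X : PowerSeries ℤ) ^ (n + 1) ∣
      Dx * (Qpd n : PowerSeries ℤ) - (Ppd n : PowerSeries ℤ)) :
    (PowerSeries.X * (PowerSeries.map (Int.castRingHom (ZMod 4)) Cx) ^ 2
        + PowerSeries.map (Int.castRingHom (ZMod 4)) Cx + 1) ^ 2 = 0 ∧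
    (PowerSeries.X * (PowerSeries.map (Int.castRingHom (ZMod 4)) Dx) ^ 2
        + PowerSeries.map (Int.castRingHom (ZMod 4)) Dx + 1) ^ 2 = 0 := by
  exact ⟨main_half Cx Ptm Qtm map_Ptm map_Qtm hC, main_half Dx Ppd Qpd map_Ppd map_Qpd hD⟩
end

section
/- For every n ≥ 1, the Hankel determinants of C(x)=Σ c_n x^n and D(x)=Σ d_n x^n satisfy det((c_{i+j})_{0≤i,j≤n−1}) = Π_{k=0}^{n−2} s(k)^{n−1−k} and det((d_{i+j})_{0≤i,j≤n−1}) = (−1)^{n(n−1)/2} · Π_{k=0}^{n−2} s(k)^{n−1−k} (with the empty product for n = 1 equal to 1). -/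
/-!
For convergents `P n / Q n` given by the three-term recurrence with coefficients `u (n + 2) X`,
`P (n+1) Q n - P n Q (n+1) = e n X^(n+1)` with `e n = ∏_{k<n} -u (k+2)`, and
`deg P (2j) ≤ j`, `deg Q (2j) ≤ j`. Multiplying the Hankel matrix of `f` on the right by the
unitriangular matrix whose `j`-th column lists the coefficients of `Q (2j)` gives the matrix
`[x^(i+j)] (f · Q (2j))`. As `f · Q (2j)` agrees with `P (2j)` up to order `2j`, its rows
`i ≥ 1` vanish on and above the diagonal, its subdiagonal is `e (2i)` and its corner is the
leading coefficient `∏ u (2k+2)` of `P (2m)`; a cyclic shift of the rows makes it triangular.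
For the Thue–Morse and period-doubling sequences these products are evaluated using
`t (n+1) = -s n · t n`.
-/

open Polynomial

open Polynomial

theorem Polynomial.natDegree_add_C_mul_X_mul_le {R : Type*} [Semiring R] {p q : R[X]} {a : ℕ}
    (c : R) (hp : p.natDegree ≤ a) (hq : q.natDegree + 1 ≤ a) :
    (p + C c * X * q).natDegree ≤ a := by
  refine (natDegree_add_le _ _).trans (max_le hp ?_)
  rw [mul_assoc]
  refine (natDegree_C_mul_le _ _).trans (natDegree_mul_le.trans ?_)
  have := natDegree_X_le (R := R)
  omega

theorem Matrix.det_eq_of_tail_lowerTriangular {R : Type*} [CommRing R] {m : ℕ}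
    (M : Matrix (Fin (m + 1)) (Fin (m + 1)) R)
    (hM : ∀ (i : Fin m) (j : Fin (m + 1)), i.castSucc < j → M i.succ j = 0) :
    M.det = (-1) ^ m * (M 0 (Fin.last m) * ∏ i : Fin m, M i.succ i.castSucc) := by
  have hσ (i : Fin m) : finRotate (m + 1) i.castSucc = i.succ :=
    Fin.ext (by rw [coe_finRotate_of_ne_last (Fin.castSucc_lt_last i).ne]; simp)
  have hlower : (M.submatrix (finRotate (m + 1)) id).IsLowerTriangular := by
    intro i j hij
    obtain ⟨i, rfl⟩ | rfl := Fin.eq_castSucc_or_eq_last i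
    · simpa [hσ] using hM i j hij
    · exact absurd hij (not_lt_of_ge (Fin.le_last j))
  have hdet := Matrix.det_permute (finRotate (m + 1)) M
  rw [Matrix.det_of_isLowerTriangular _ hlower, Fin.prod_univ_castSucc] at hdet
  simp only [Matrix.submatrix_apply, hσ, id_eq, finRotate_last, sign_finRotate,
    add_tsub_cancel_right, Units.val_pow_eq_pow_val, Units.val_neg, Units.val_one, Int.cast_pow,
    Int.cast_neg, Int.cast_one] at hdet
  have hsq : ((-1 : R) ^ m) ^ 2 = 1 := by rw [← pow_mul, mul_comm, pow_mul, neg_one_sq, one_pow]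
  linear_combination (-(-1 : R) ^ m) * hdet - M.det * hsq

theorem Finset.prod_range_prod_range_succ {M : Type*} [CommMonoid M] (g : ℕ → M) (m : ℕ) :
    ∏ i ∈ Finset.range m, ∏ k ∈ Finset.range (i + 1), g k =
      ∏ k ∈ Finset.range m, g k ^ (m - k) := by
  induction m with
  | zero => rfl
  | succ m ih =>
    calc _ = ∏ k ∈ Finset.range (m + 1), (g k ^ (m - k) * g k) := by
          rw [Finset.prod_range_succ, ih, Finset.prod_mul_distrib,
            Finset.prod_range_succ (fun k => g k ^ (m - k)) m, Nat.sub_self, pow_zero, mul_one]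
      _ = _ := Finset.prod_congr rfl fun k hk => by
          rw [← pow_succ, show m - k + 1 = m + 1 - k by rw [Finset.mem_range] at hk; omega]

section Convergents

variable {R : Type*} [CommRing R] (u : ℕ → R)

noncomputable def cfNum : ℕ → R[X]
  | 0 => 1
  | 1 => 1
  | n + 2 => cfNum (n + 1) + C (u (n + 2)) * X * cfNum n

noncomputable def cfDen : ℕ → R[X]
  | 0 => 1
  | 1 => 1 - X
  | n + 2 => cfDen (n + 1) + C (u (n + 2)) * X * cfDen n

def convergentDet (n : ℕ) : R := ∏ k ∈ Finset.range n, -u (k + 2)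

theorem cfDen_coeff_zero (n : ℕ) : (cfDen u n).coeff 0 = 1 := by
  fun_induction cfDen u n <;> simp [*]

theorem natDegree_cfNum_le (n : ℕ) : (cfNum u n).natDegree ≤ n / 2 := by
  fun_induction cfNum u n with
  | case1 | case2 => simp
  | case3 n ih1 ih2 => exact natDegree_add_C_mul_X_mul_le _ (ih1.trans (by omega)) (by omega)

theorem natDegree_cfDen_le (n : ℕ) : (cfDen u n).natDegree ≤ (n + 1) / 2 := by
  fun_induction cfDen u n with
  | case1 => simp
  | case2 => exact (natDegree_sub_le _ _).trans (by simpa using natDegree_X_le)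
  | case3 n ih1 ih2 => exact natDegree_add_C_mul_X_mul_le _ (ih1.trans (by omega)) (by omega)

theorem coeff_cfNum_two_mul (n : ℕ) :
    (cfNum u (2 * n)).coeff n = ∏ k ∈ Finset.range n, u (2 * (k + 1)) := by
  induction n with
  | zero => simp [cfNum]
  | succ n ih =>
    have hodd : (cfNum u (2 * n + 1)).coeff (n + 1) = 0 :=
      coeff_eq_zero_of_natDegree_lt ((natDegree_cfNum_le u _).trans_lt (by omega))
    rw [Finset.prod_range_succ, show 2 * (n + 1) = 2 * n + 2 by ring, cfNum, coeff_add, hodd,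
      mul_assoc, coeff_C_mul, coeff_X_mul, ih, zero_add, mul_comm]

theorem cfNum_succ_mul_cfDen_sub (n : ℕ) :
    cfNum u (n + 1) * cfDen u n - cfNum u n * cfDen u (n + 1) =
      C (convergentDet u n) * X ^ (n + 1) := by
  induction n with
  | zero => simp [cfNum, cfDen, convergentDet]
  | succ n ih =>
    rw [cfNum, cfDen, convergentDet, Finset.prod_range_succ, ← convergentDet, map_mul, map_neg]
    linear_combination (-(C (u (n + 2)) * X)) * ih

theorem convergentDet_two_mul_succ (n : ℕ) :
    convergentDet u (2 * (n + 1)) =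
      convergentDet u (2 * n) * (u (2 * (n + 1)) * u (2 * (n + 1) + 1)) := by
  rw [show 2 * (n + 1) = 2 * n + 1 + 1 by ring]
  simp only [convergentDet, Finset.prod_range_succ]
  ring

end Convergents

theorem Ptm_eq_cfNum : Ptm = cfNum tmSeq := by
  funext n; fun_induction Ptm n <;> simp [cfNum, *]

theorem Qtm_eq_cfDen : Qtm = cfDen tmSeq := by
  funext n; fun_induction Qtm n <;> simp [cfDen, *]

theorem Ppd_eq_cfNum : Ppd = cfNum pdSeq := by
  funext n; fun_induction Ppd n <;> simp [cfNum, *]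

theorem Qpd_eq_cfDen : Qpd = cfDen pdSeq := by
  funext n; fun_induction Qpd n <;> simp [cfDen, *]

section Hankel

variable {R : Type*} [CommRing R]

def HasConvergents (u : ℕ → R) (f : PowerSeries R) : Prop :=
  ∀ n, (PowerSeries.X : PowerSeries R) ^ (n + 1) ∣
    f * (cfDen u n : PowerSeries R) - (cfNum u n : PowerSeries R)

noncomputable def hankel (f : PowerSeries R) (n : ℕ) : Matrix (Fin n) (Fin n) R :=
  Matrix.of fun i j => PowerSeries.coeff ((i : ℕ) + (j : ℕ)) f

theorem hankel_mul_apply (f : PowerSeries R) {q : ℕ → R[X]} (hq : ∀ j, (q j).natDegree ≤ j)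
    {n : ℕ} (i j : Fin n) :
    (hankel f n * Matrix.of fun k l : Fin n => if k ≤ l then (q l).coeff (l - k) else 0) i j =
      PowerSeries.coeff ((i : ℕ) + (j : ℕ)) (f * (q j : PowerSeries R)) := by
  have hlow : ∀ k ∈ Finset.range i,
      PowerSeries.coeff k f * PowerSeries.coeff (i + j - k) (q j : PowerSeries R) = 0 := by
    intro k hk
    rw [Finset.mem_range] at hk
    rw [Polynomial.coeff_coe, coeff_eq_zero_of_natDegree_lt ((hq j).trans_lt (by omega)), mul_zero]
  have hrange : (Finset.range n).filter (· ≤ (j : ℕ)) = Finset.range (j + 1) := by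
    ext l; simp only [Finset.mem_filter, Finset.mem_range]; omega
  calc _ = ∑ l ∈ Finset.range n,
        if l ≤ (j : ℕ) then PowerSeries.coeff (i + l) f * (q j).coeff (j - l) else 0 := by
        rw [Matrix.mul_apply, Finset.sum_range]
        simp only [hankel, Matrix.of_apply, mul_ite, mul_zero, Fin.le_def]
    _ = ∑ l ∈ Finset.range (j + 1), PowerSeries.coeff (i + l) f * (q j).coeff (j - l) := by
        rw [← Finset.sum_filter, hrange]
    _ = _ := by
        symm
        rw [PowerSeries.coeff_mul, Finset.Nat.sum_antidiagonal_eq_sum_range_succ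
            (fun a b => PowerSeries.coeff a f * PowerSeries.coeff b (q j : PowerSeries R)),
          Nat.succ_eq_add_one, add_assoc, Finset.sum_range_add, Finset.sum_eq_zero hlow, zero_add]
        refine Finset.sum_congr rfl fun l _ => ?_
        rw [Polynomial.coeff_coe, show (i : ℕ) + j - (i + l) = j - l by omega]

variable {u : ℕ → R} {f : PowerSeries R}

theorem HasConvergents.coeff_mul_cfDen_of_le (hf : HasConvergents u f) {a n : ℕ} (h : a ≤ n) :
    PowerSeries.coeff a (f * (cfDen u n : PowerSeries R)) = (cfNum u n).coeff a := by
  have := PowerSeries.X_pow_dvd_iff.mp (hf n) a (by omega)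
  rwa [map_sub, Polynomial.coeff_coe, sub_eq_zero] at this

theorem HasConvergents.coeff_succ_mul_cfDen (hf : HasConvergents u f) (n : ℕ) :
    PowerSeries.coeff (n + 1) (f * (cfDen u n : PowerSeries R)) = convergentDet u n := by
  obtain ⟨g, hg⟩ := hf n
  obtain ⟨g', hg'⟩ := hf (n + 1)
  have hcross := congrArg (fun p : R[X] => (p : PowerSeries R)) (cfNum_succ_mul_cfDen_sub u n)
  simp only [Polynomial.coe_sub, Polynomial.coe_mul, Polynomial.coe_C, Polynomial.coe_pow,
    Polynomial.coe_X] at hcross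
  -- the cross identity rewritten in terms of the errors `X ^ (n + 1) * g` and `X ^ (n + 2) * g'`
  have key : PowerSeries.X ^ (n + 1) *
      (g * (cfDen u (n + 1) : PowerSeries R) - PowerSeries.X * g' * (cfDen u n : PowerSeries R)) =
      PowerSeries.X ^ (n + 1) * PowerSeries.C (convergentDet u n) := by
    linear_combination -(cfDen u (n + 1) : PowerSeries R) * hg + (cfDen u n : PowerSeries R) * hg'
      + hcross
  have hconst := congrArg PowerSeries.constantCoeff (PowerSeries.X_pow_mul_cancel key)
  simp only [map_sub, map_mul, constantCoeff_coe, PowerSeries.constantCoeff_X, zero_mul, sub_zero,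
    PowerSeries.constantCoeff_C] at hconst
  have hcoeff := congrArg (PowerSeries.coeff (n + 1)) hg
  rw [PowerSeries.coeff_X_pow_mul', if_pos le_rfl, Nat.sub_self, map_sub, Polynomial.coeff_coe,
    coeff_eq_zero_of_natDegree_lt ((natDegree_cfNum_le u n).trans_lt (by omega)), sub_zero]
    at hcoeff
  rw [hcoeff, PowerSeries.coeff_zero_eq_constantCoeff_apply, ← hconst, cfDen_coeff_zero, mul_one]

theorem HasConvergents.det_hankel (hf : HasConvergents u f) (m : ℕ) :
    (hankel f (m + 1)).det =
      ∏ i ∈ Finset.range m, -(convergentDet u (2 * i) * u (2 * (i + 1))) := by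
  set B : Matrix (Fin (m + 1)) (Fin (m + 1)) R :=
    Matrix.of fun k l => if k ≤ l then (cfDen u (2 * l)).coeff (l - k) else 0
  have hB : B.det = 1 := by
    have hupper : B.IsUpperTriangular := fun i j hij => if_neg (not_le.mpr hij)
    rw [Matrix.det_of_isUpperTriangular hupper]
    simp [B, cfDen_coeff_zero]
  have hAB : ∀ i j, (hankel f (m + 1) * B) i j =
      PowerSeries.coeff ((i : ℕ) + (j : ℕ)) (f * (cfDen u (2 * j) : PowerSeries R)) :=
    hankel_mul_apply f (q := fun j => cfDen u (2 * j))
      fun j => (natDegree_cfDen_le u _).trans (by omega)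
  rw [← mul_one (hankel f (m + 1)).det, ← hB, ← Matrix.det_mul,
    Matrix.det_eq_of_tail_lowerTriangular]
  · have hcorner :
        (hankel f (m + 1) * B) 0 (Fin.last m) = ∏ i ∈ Finset.range m, u (2 * (i + 1)) := by
      rw [hAB, hf.coeff_mul_cfDen_of_le (by rw [Fin.val_zero, Fin.val_last]; omega)]
      simpa using coeff_cfNum_two_mul u m
    have hdiag (i : Fin m) :
        (hankel f (m + 1) * B) i.succ i.castSucc = convergentDet u (2 * i) := by
      rw [hAB, ← hf.coeff_succ_mul_cfDen, Fin.val_succ, Fin.val_castSucc,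
        show (i : ℕ) + 1 + i = 2 * i + 1 by omega]
    rw [hcorner, Finset.prod_congr rfl fun i _ => hdiag i, Fin.prod_univ_eq_prod_range
      (fun i => convergentDet u (2 * i)), Finset.prod_neg, Finset.prod_mul_distrib,
      Finset.card_range]
    ring
  · intro i j hij
    rw [Fin.lt_def, Fin.val_castSucc] at hij
    rw [hAB, Fin.val_succ, hf.coeff_mul_cfDen_of_le (by omega),
      coeff_eq_zero_of_natDegree_lt ((natDegree_cfNum_le u _).trans_lt (by omega))]

end Hankel

theorem tmSeq_zero : tmSeq 0 = 1 := by simp [tmSeq]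

theorem pdSeq_zero : pdSeq 0 = 1 := by simp [pdSeq]

theorem tmSeq_two_mul (n : ℕ) : tmSeq (2 * n) = tmSeq n := by
  rcases n with _ | n
  · rfl
  · rw [show 2 * (n + 1) = 2 * n + 1 + 1 by ring, tmSeq, if_pos (by omega)]
    congr 1
    omega

theorem tmSeq_two_mul_add_one (n : ℕ) : tmSeq (2 * n + 1) = -tmSeq n := by
  rw [tmSeq, if_neg (by omega), show (2 * n + 1) / 2 = n by omega]

theorem pdSeq_two_mul (n : ℕ) : pdSeq (2 * n) = 1 := by
  rcases n with _ | n
  · exact pdSeq_zero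
  · rw [show 2 * (n + 1) = 2 * n + 1 + 1 by ring, pdSeq, if_pos (by omega)]

theorem pdSeq_two_mul_add_one (n : ℕ) : pdSeq (2 * n + 1) = -pdSeq n := by
  rw [pdSeq, if_neg (by omega), show (2 * n + 1) / 2 = n by omega]

theorem tmSeq_mul_self (n : ℕ) : tmSeq n * tmSeq n = 1 := by
  induction n using Nat.evenOddRec with
  | h0 => rw [tmSeq_zero, one_mul]
  | h_even n ih => rwa [tmSeq_two_mul]
  | h_odd n ih => rwa [tmSeq_two_mul_add_one, neg_mul_neg]

theorem tmSeq_succ (n : ℕ) : tmSeq (n + 1) = -(pdSeq n * tmSeq n) := by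
  induction n using Nat.evenOddRec with
  | h0 => simp [tmSeq_two_mul_add_one 0, tmSeq_zero, pdSeq_zero]
  | h_even n _ => rw [tmSeq_two_mul_add_one, pdSeq_two_mul, tmSeq_two_mul, one_mul]
  | h_odd n ih =>
    rw [show 2 * n + 1 + 1 = 2 * (n + 1) by ring, tmSeq_two_mul, ih, pdSeq_two_mul_add_one,
      tmSeq_two_mul_add_one, neg_mul_neg]

theorem tmSeq_eq_neg_one_pow_mul_prod (n : ℕ) :
    tmSeq n = (-1) ^ n * ∏ k ∈ Finset.range n, pdSeq k := by
  induction n with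
  | zero => simp [tmSeq_zero]
  | succ n ih => rw [tmSeq_succ, ih, Finset.prod_range_succ, pow_succ]; ring

theorem convergentDet_tmSeq_two_mul (n : ℕ) : convergentDet tmSeq (2 * n) = (-1) ^ n := by
  induction n with
  | zero => rfl
  | succ n ih =>
    rw [convergentDet_two_mul_succ, ih, tmSeq_two_mul, tmSeq_two_mul_add_one, pow_succ]
    linear_combination (-(-1 : ℤ) ^ n) * tmSeq_mul_self (n + 1)

theorem convergentDet_pdSeq_two_mul (n : ℕ) : convergentDet pdSeq (2 * n) = -tmSeq (n + 1) := by
  induction n with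
  | zero => simp [convergentDet, tmSeq_succ, tmSeq_zero, pdSeq_zero]
  | succ n ih =>
    rw [convergentDet_two_mul_succ, ih, pdSeq_two_mul, pdSeq_two_mul_add_one, tmSeq_succ (n + 1)]
    ring

theorem HasConvergents.det_hankel_tmSeq {f : PowerSeries ℤ} (hf : HasConvergents tmSeq f)
    {n : ℕ} (hn : 1 ≤ n) :
    (hankel f n).det = ∏ k ∈ Finset.range (n - 1), pdSeq k ^ (n - 1 - k) := by
  obtain ⟨m, rfl⟩ := Nat.exists_eq_add_of_le' hn
  rw [hf.det_hankel, Nat.add_sub_cancel, ← Finset.prod_range_prod_range_succ]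
  refine Finset.prod_congr rfl fun i _ => ?_
  rw [convergentDet_tmSeq_two_mul, tmSeq_two_mul, tmSeq_eq_neg_one_pow_mul_prod, pow_succ]
  linear_combination (∏ k ∈ Finset.range (i + 1), pdSeq k) *
    (Even.neg_one_pow ⟨i, rfl⟩ : (-1 : ℤ) ^ (i + i) = 1)

theorem HasConvergents.det_hankel_pdSeq {f : PowerSeries ℤ} (hf : HasConvergents pdSeq f)
    {n : ℕ} (hn : 1 ≤ n) :
    (hankel f n).det =
      (-1) ^ (n * (n - 1) / 2) * ∏ k ∈ Finset.range (n - 1), pdSeq k ^ (n - 1 - k) := by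
  obtain ⟨m, rfl⟩ := Nat.exists_eq_add_of_le' hn
  rw [hf.det_hankel, ← Finset.sum_range_id, ← Finset.prod_pow_eq_pow_sum,
    Finset.prod_range_succ', pow_zero, mul_one, Nat.add_sub_cancel,
    ← Finset.prod_range_prod_range_succ, ← Finset.prod_mul_distrib]
  refine Finset.prod_congr rfl fun i _ => ?_
  rw [convergentDet_pdSeq_two_mul, pdSeq_two_mul, tmSeq_eq_neg_one_pow_mul_prod]
  ring

/-- Hankel determinants of C(x) and D(x): for n ≥ 1,
H_n(C) = Π_{k=0}^{n−2} s(k)^{n−1−k} and H_n(D) = (−1)^{n(n−1)/2}·H_n(C). -/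
theorem tm_pd_cf_hankel_determinants (Cx Dx : PowerSeries ℤ)
    (hC : ∀ n : ℕ, (PowerSeries.X : PowerSeries ℤ) ^ (n + 1) ∣
      Cx * (Qtm n : PowerSeries ℤ) - (Ptm n : PowerSeries ℤ))
    (hD : ∀ n : ℕ, (PowerSeries.X : PowerSeries ℤ) ^ (n + 1) ∣
      Dx * (Qpd n : PowerSeries ℤ) - (Ppd n : PowerSeries ℤ)) :
    ∀ n : ℕ, 1 ≤ n →
      (Matrix.of fun i j : Fin n =>
          PowerSeries.coeff ((i : ℕ) + (j : ℕ)) Cx).det =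
        ∏ k ∈ Finset.range (n - 1), pdSeq k ^ (n - 1 - k) ∧
      (Matrix.of fun i j : Fin n =>
          PowerSeries.coeff ((i : ℕ) + (j : ℕ)) Dx).det =
        (-1) ^ (n * (n - 1) / 2) *
          ∏ k ∈ Finset.range (n - 1), pdSeq k ^ (n - 1 - k) := by
  have hC' : HasConvergents tmSeq Cx := by
    rwa [HasConvergents, ← Ptm_eq_cfNum, ← Qtm_eq_cfDen]
  have hD' : HasConvergents pdSeq Dx := by
    rwa [HasConvergents, ← Ppd_eq_cfNum, ← Qpd_eq_cfDen]
  exact fun n hn => ⟨hC'.det_hankel_tmSeq hn, hD'.det_hankel_pdSeq hn⟩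
end
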